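/- Let P be an n×n row-stochastic real matrix (with n ≥ 1), let γ ∈ [0,1), let m ≥ 1 be a natural number, and set H_m = I - γ^m P^m and H̄_m = diag(H_m). Then ρ(I - H̄_m⁻¹ H_m) ≤ ρ(I - H_m) < 1. -/

import Mathlib

/-!
Since `P^m` is row-stochastic, `I - H_m = γ^m P^m` has the all-ones vector as an eigenvector
with eigenvalue `γ^m`, and each of its absolute row sums equals `γ^m`; by Gershgorin's theorem
`ρ(I - H_m) = γ^m < 1`. The Jacobi matrix `I - H̄_m⁻¹ H_m` has zero diagonal and `i`-th absolute
row sum `γ^m (1 - q_ii) / (1 - γ^m q_ii) ≤ γ^m`, where `q_ii` is the diagonal entry of `P^m`, so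
Gershgorin bounds its spectral radius by `γ^m` as well.
-/

open Matrix

/-- Spectral radius of a real square matrix: the maximum of `|μ|` over all complex
eigenvalues `μ` of the matrix (elements of the spectrum of its complexification). -/
noncomputable def specRad {n : ℕ} (A : Matrix (Fin n) (Fin n) ℝ) : ℝ :=
  sSup {x : ℝ | ∃ μ ∈ spectrum ℂ (A.map (Complex.ofReal ·)), x = ‖μ‖}

section

variable {ι : Type*} [Fintype ι] [DecidableEq ι]

theorem norm_le_of_mem_spectrum_map_ofReal {B : Matrix ι ι ℝ} {r : ℝ}
    (hB : ∀ i, ∑ j, |B i j| ≤ r) {μ : ℂ}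
    (hμ : μ ∈ spectrum ℂ (B.map (Complex.ofReal ·))) : ‖μ‖ ≤ r := by
  rw [← spectrum_toLin', ← Module.End.hasEigenvalue_iff_mem_spectrum] at hμ
  obtain ⟨k, hk⟩ := eigenvalue_mem_ball hμ
  rw [Metric.mem_closedBall, dist_eq_norm] at hk
  simp only [map_apply, Complex.norm_real, Real.norm_eq_abs] at hk
  calc ‖μ‖ ≤ ‖μ - B k k‖ + ‖(B k k : ℂ)‖ := norm_le_norm_sub_add _ _
    _ ≤ ∑ j ∈ Finset.univ.erase k, |B k j| + |B k k| := by
        rw [Complex.norm_real, Real.norm_eq_abs]; gcongr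
    _ = ∑ j, |B k j| := Finset.sum_erase_add _ _ (Finset.mem_univ k)
    _ ≤ r := hB k

theorem ofReal_mem_spectrum_map_ofReal_of_mulVec_eq_smul {A : Matrix ι ι ℝ} {v : ι → ℝ} {c : ℝ}
    (hv : v ≠ 0) (hAv : A *ᵥ v = c • v) :
    (c : ℂ) ∈ spectrum ℂ (A.map (Complex.ofReal ·)) := by
  rw [← spectrum_toLin']
  refine Module.End.HasEigenvalue.mem_spectrum
    (Module.End.hasEigenvalue_of_hasEigenvector (x := Complex.ofReal ∘ v) ⟨?_, ?_⟩)
  · rw [Module.End.mem_eigenspace_iff, toLin'_apply]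
    ext i
    have hi := (RingHom.map_mulVec Complex.ofRealHom A v i).symm
    simp only [hAv, Pi.smul_apply, smul_eq_mul, map_mul] at hi
    exact hi
  · simpa [funext_iff] using hv

noncomputable def jacobiIterationMatrix {K : Type*} [Field K] (H : Matrix ι ι K) : Matrix ι ι K :=
  1 - (diagonal fun i => H i i)⁻¹ * H

theorem jacobiIterationMatrix_apply {K : Type*} [Field K] {H : Matrix ι ι K} (hH : ∀ i, H i i ≠ 0)
    (i j : ι) : jacobiIterationMatrix H i j = if i = j then 0 else -(H i j / H i i) := by
  have hinv : (diagonal fun i => H i i)⁻¹ = diagonal fun i => (H i i)⁻¹ :=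
    inv_eq_left_inv (by simp [diagonal_mul_diagonal, inv_mul_cancel₀ (hH _)])
  rw [jacobiIterationMatrix, hinv, Matrix.sub_apply, diagonal_mul, one_apply]
  split_ifs with hij
  · subst hij; rw [inv_mul_cancel₀ (hH i), sub_self]
  · rw [zero_sub, inv_mul_eq_div]

variable {K : Type*} [Field K] [LinearOrder K] [IsStrictOrderedRing K]

theorem sum_abs_smul_of_mem_rowStochastic {Q : Matrix ι ι K} (hQ : Q ∈ rowStochastic K ι)
    {c : K} (hc : 0 ≤ c) (i : ι) : ∑ j, |(c • Q) i j| = c := by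
  simp_rw [Matrix.smul_apply, smul_eq_mul, abs_mul, abs_of_nonneg hc,
    abs_of_nonneg (nonneg_of_mem_rowStochastic hQ), ← Finset.mul_sum,
    sum_row_of_mem_rowStochastic hQ, mul_one]

theorem sum_abs_jacobiIterationMatrix {H : Matrix ι ι K} (hH : ∀ i, H i i ≠ 0) (i : ι) :
    ∑ j, |jacobiIterationMatrix H i j| = (∑ j ∈ Finset.univ.erase i, |H i j|) / |H i i| := by
  rw [← Finset.sum_erase_add _ (fun j => |jacobiIterationMatrix H i j|) (Finset.mem_univ i),
    Finset.sum_div, jacobiIterationMatrix_apply hH i i, if_pos rfl, abs_zero, add_zero]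
  refine Finset.sum_congr rfl fun j hj => ?_
  rw [jacobiIterationMatrix_apply hH, if_neg (Finset.ne_of_mem_erase hj).symm, abs_neg, abs_div]

theorem sum_abs_jacobiIterationMatrix_one_sub_smul_le {Q : Matrix ι ι K}
    (hQ : Q ∈ rowStochastic K ι) {c : K} (hc0 : 0 ≤ c) (hc1 : c < 1) (i : ι) :
    ∑ j, |jacobiIterationMatrix (1 - c • Q) i j| ≤ c := by
  have hdiag : ∀ k, (1 - c • Q) k k = 1 - c * Q k k := fun k => by simp
  have hdiag_pos : ∀ k, 0 < 1 - c * Q k k := fun k => by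
    nlinarith [le_one_of_mem_rowStochastic hQ (i := k) (j := k)]
  have hoff : ∑ j ∈ Finset.univ.erase i, |(1 - c • Q) i j| = c * (1 - Q i i) := by
    rw [← sum_row_of_mem_rowStochastic hQ i, ← Finset.sum_erase_add _ _ (Finset.mem_univ i),
      add_sub_cancel_right, Finset.mul_sum]
    refine Finset.sum_congr rfl fun j hj => ?_
    rw [Matrix.sub_apply, one_apply_ne (Finset.ne_of_mem_erase hj).symm, Matrix.smul_apply,
      smul_eq_mul, zero_sub, abs_neg,
      abs_of_nonneg (mul_nonneg hc0 (nonneg_of_mem_rowStochastic hQ))]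
  rw [sum_abs_jacobiIterationMatrix (fun k => hdiag k ▸ (hdiag_pos k).ne'), hoff, hdiag,
    abs_of_pos (hdiag_pos i), div_le_iff₀ (hdiag_pos i)]
  nlinarith [mul_nonneg (mul_nonneg hc0 (nonneg_of_mem_rowStochastic hQ (i := i) (j := i)))
    (sub_nonneg.2 hc1.le)]

end

section

variable {n : ℕ}

theorem specRad_le_of_sum_abs_le {A : Matrix (Fin n) (Fin n) ℝ} {r : ℝ} (hr : 0 ≤ r)
    (hA : ∀ i, ∑ j, |A i j| ≤ r) : specRad A ≤ r := by
  refine Real.sSup_le ?_ hr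
  rintro _ ⟨μ, hμ, rfl⟩
  exact norm_le_of_mem_spectrum_map_ofReal hA hμ

theorem norm_le_specRad {A : Matrix (Fin n) (Fin n) ℝ} {μ : ℂ}
    (hμ : μ ∈ spectrum ℂ (A.map (Complex.ofReal ·))) : ‖μ‖ ≤ specRad A := by
  have hbdd : BddAbove {x : ℝ | ∃ ν ∈ spectrum ℂ (A.map (Complex.ofReal ·)), x = ‖ν‖} := by
    refine ((A.map (Complex.ofReal ·)).finite_spectrum.image (‖·‖)).bddAbove.mono ?_
    rintro _ ⟨ν, hν, rfl⟩
    exact ⟨ν, hν, rfl⟩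
  exact le_csSup hbdd ⟨μ, hμ, rfl⟩

theorem specRad_smul_of_mem_rowStochastic [Nonempty (Fin n)] {Q : Matrix (Fin n) (Fin n) ℝ}
    (hQ : Q ∈ rowStochastic ℝ (Fin n)) {c : ℝ} (hc : 0 ≤ c) : specRad (c • Q) = c := by
  refine le_antisymm
    (specRad_le_of_sum_abs_le hc fun i => (sum_abs_smul_of_mem_rowStochastic hQ hc i).le) ?_
  have hmem : (c : ℂ) ∈ spectrum ℂ ((c • Q).map (Complex.ofReal ·)) :=
    ofReal_mem_spectrum_map_ofReal_of_mulVec_eq_smul one_ne_zero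
      (by rw [smul_mulVec, one_vecMul_of_mem_rowStochastic hQ])
  simpa [abs_of_nonneg hc] using norm_le_specRad hmem

end

/-- For a row-stochastic `P`, `γ ∈ [0,1)`, `m ≥ 1`,
`H_m = I - γ^m P^m`, `H̄_m = diag(H_m)`: `ρ(I - H̄_m⁻¹H_m) ≤ ρ(I - H_m) < 1`. -/
theorem stmt_12 {n : ℕ} (hn : 1 ≤ n) (P : Matrix (Fin n) (Fin n) ℝ)
    (hP0 : ∀ i j, 0 ≤ P i j) (hP1 : ∀ i, ∑ j, P i j = 1)
    (γ : ℝ) (hγ0 : 0 ≤ γ) (hγ1 : γ < 1)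
    (m : ℕ) (hm : 1 ≤ m)
    (Hm Hmbar : Matrix (Fin n) (Fin n) ℝ)
    (hH : Hm = 1 - γ ^ m • P ^ m)
    (hB : Hmbar = Matrix.diagonal (fun i => Hm i i)) :
    specRad (1 - Hmbar⁻¹ * Hm) ≤ specRad (1 - Hm) ∧ specRad (1 - Hm) < 1 := by
  subst hH hB
  have : Nonempty (Fin n) := ⟨⟨0, hn⟩⟩
  have hPm : P ^ m ∈ rowStochastic ℝ (Fin n) :=
    pow_mem (mem_rowStochastic_iff_sum.2 ⟨hP0, hP1⟩) m
  have hc0 : 0 ≤ γ ^ m := pow_nonneg hγ0 m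
  have hc1 : γ ^ m < 1 := pow_lt_one₀ hγ0 hγ1 (by omega)
  rw [sub_sub_cancel, specRad_smul_of_mem_rowStochastic hPm hc0]
  exact ⟨specRad_le_of_sum_abs_le hc0
    (sum_abs_jacobiIterationMatrix_one_sub_smul_le hPm hc0 hc1), hc1⟩
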